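/- Let 1/4 < H < 1 and let ρ be a real number satisfying: ρ < 4H-3 if 1/4 < H < 1/2, and ρ < 2(H-1) if 1/2 ≤ H < 1. Then the double series ∑_{k ∈ ℤ²₀} |k|^{2ρ} ∑_{h ∈ ℤ²₀, h ≠ k} γ_{h,k}² / (|h|^{4H} |k-h|^{4H}) converges (is finite), where γ_{h,k} = (h^⊥ · k)((k-h) · k) / (2π |h| |k-h| |k|). -/

import Mathlib

/-- Euclidean norm of an element of `ℤ²`. -/
noncomputable def znorm (k : ℤ × ℤ) : ℝ :=
  Real.sqrt ((k.1 : ℝ) ^ 2 + (k.2 : ℝ) ^ 2)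

/-- The rotation by `π/2`: `h^⊥ = (-h⁽²⁾, h⁽¹⁾)`. -/
def perp (h : ℤ × ℤ) : ℤ × ℤ := (-h.2, h.1)

/-- Euclidean inner product of two elements of `ℤ²`, as a real number. -/
def zdot (a b : ℤ × ℤ) : ℝ := (a.1 : ℝ) * (b.1 : ℝ) + (a.2 : ℝ) * (b.2 : ℝ)

/-- The coefficient `γ_{h,k}` of the bilinear term in Fourier series. -/
noncomputable def gammaCoef (h k : ℤ × ℤ) : ℝ :=
  (zdot (perp h) k * zdot (k - h) k) / (2 * Real.pi * znorm h * znorm (k - h) * znorm k)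

/-! By Cauchy–Schwarz `|γ_{h,k}| ≤ |k|`, so with `a = 4H` and `β = 2ρ + 2` it suffices to bound
`∑ |k|^β |h|^(-a) |k-h|^(-a)`. Since `|k| ≤ |h| + |k-h|`, the larger of `|h|, |k-h|` is at least
`|k|/2`; comparing exponents (after taking logarithms) in the cases where `|k|` or the smaller of
`|h|, |k-h|` is least gives the pointwise bound `2^a (|h|^(-s) + |k-h|^(-s)) |k|^(-s)` for any
`s > 2` with `s ≤ 2a`, `β + s ≤ a`, `β + 2s ≤ 2a`; the hypotheses on `ρ` leave room for such an `s`.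
After the shift `h ↦ k - h` the dominating double series is `2 (∑_{x ∈ ℤ²} |x|^(-s))²`, finite as
`s > 2`. -/

open Real
open scoped ENNReal

lemma znorm_nonneg (k : ℤ × ℤ) : 0 ≤ znorm k := Real.sqrt_nonneg _

lemma znorm_sq (k : ℤ × ℤ) : znorm k ^ 2 = (k.1 : ℝ) ^ 2 + (k.2 : ℝ) ^ 2 :=
  Real.sq_sqrt (by positivity)

lemma one_le_znorm {k : ℤ × ℤ} (hk : k ≠ 0) : 1 ≤ znorm k := by
  obtain ⟨a, b⟩ := k
  have hab : (1 : ℤ) ≤ a ^ 2 + b ^ 2 := by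
    by_contra! hlt
    have ha : a = 0 := by nlinarith [sq_nonneg a, sq_nonneg b]
    have hb : b = 0 := by nlinarith [sq_nonneg a, sq_nonneg b]
    exact hk (by simp [ha, hb])
  exact Real.one_le_sqrt.mpr (by exact_mod_cast hab)

lemma abs_zdot_le (a b : ℤ × ℤ) : |zdot a b| ≤ znorm a * znorm b := by
  rw [← Real.sqrt_sq_eq_abs, znorm, znorm, ← Real.sqrt_mul (by positivity)]
  apply Real.sqrt_le_sqrt
  rw [zdot]
  nlinarith [sq_nonneg ((a.1 : ℝ) * b.2 - (a.2 : ℝ) * b.1)]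

lemma znorm_le_add_znorm_sub (h k : ℤ × ℤ) : znorm k ≤ znorm h + znorm (k - h) := by
  have hdot := (le_abs_self _).trans (abs_zdot_le h (k - h))
  have hh := znorm_sq h
  have hkh := znorm_sq (k - h)
  rw [znorm, Real.sqrt_le_left (add_nonneg (znorm_nonneg h) (znorm_nonneg (k - h)))]
  simp only [zdot, Prod.fst_sub, Prod.snd_sub, Int.cast_sub] at hdot hkh ⊢
  nlinarith

lemma znorm_perp (h : ℤ × ℤ) : znorm (perp h) = znorm h := by
  simp [znorm, perp, add_comm]

lemma abs_gammaCoef_le (h k : ℤ × ℤ) : |gammaCoef h k| ≤ znorm k := by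
  have hD : 0 ≤ 2 * π * znorm h * znorm (k - h) * znorm k := by
    have := znorm_nonneg h; have := znorm_nonneg (k - h); have := znorm_nonneg k
    positivity
  rw [gammaCoef, abs_div, abs_mul, abs_of_nonneg hD]
  rcases hD.eq_or_lt with hD0 | hDpos
  · simp [← hD0, znorm_nonneg]
  rw [div_le_iff₀ hDpos]
  calc |zdot (perp h) k| * |zdot (k - h) k|
      ≤ (znorm h * znorm k) * (znorm (k - h) * znorm k) := by
        rw [← znorm_perp h]
        exact mul_le_mul (abs_zdot_le _ _) (abs_zdot_le _ _) (abs_nonneg _)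
          (mul_nonneg (znorm_nonneg _) (znorm_nonneg _))
    _ ≤ 2 * π * (znorm h * znorm k * (znorm (k - h) * znorm k)) := by
        refine le_mul_of_one_le_left ?_ (by linarith [pi_gt_three])
        have := znorm_nonneg h; have := znorm_nonneg (k - h); have := znorm_nonneg k
        positivity
    _ = znorm k * (2 * π * znorm h * znorm (k - h) * znorm k) := by ring

lemma gammaCoef_sq_le (h k : ℤ × ℤ) : gammaCoef h k ^ 2 ≤ znorm k ^ 2 := by
  simpa only [sq_abs] using pow_le_pow_left₀ (abs_nonneg _) (abs_gammaCoef_le h k) 2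

lemma rpow_mul_rpow_neg_mul_rpow_neg_le_of_le {x y z a s β : ℝ} (hx : 1 ≤ x) (hxy : x ≤ y)
    (hz : 1 ≤ z) (hzxy : z ≤ x + y) (ha : 0 ≤ a) (hsa : s ≤ 2 * a) (hβ₁ : β + s ≤ a)
    (hβ₂ : β + 2 * s ≤ 2 * a) :
    z ^ β * x ^ (-a) * y ^ (-a) ≤ 2 ^ a * (x ^ (-s) * z ^ (-s)) := by
  have hX : 0 ≤ log x := log_nonneg hx
  have hXY : log x ≤ log y := log_le_log (by linarith) hxy
  have hZ : 0 ≤ log z := log_nonneg hz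
  have hZY : log z ≤ log 2 + log y := by
    rw [← log_mul two_ne_zero (by linarith)]
    exact log_le_log (by linarith) (by linarith)
  have hL : 0 ≤ log 2 := log_nonneg one_le_two
  simp only [rpow_def_of_pos (by linarith : (0 : ℝ) < x),
    rpow_def_of_pos (by linarith : (0 : ℝ) < y), rpow_def_of_pos (by linarith : (0 : ℝ) < z),
    rpow_def_of_pos two_pos, ← exp_add]
  apply exp_le_exp.mpr
  rcases le_total (log z) (log x) with hZX | hXZ
  · nlinarith [mul_nonneg (sub_nonneg.mpr hβ₂) hZ,
      mul_nonneg (sub_nonneg.mpr hsa) (sub_nonneg.mpr hZX),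
      mul_nonneg ha (sub_nonneg.mpr hXY), mul_nonneg ha hL]
  · nlinarith [mul_nonneg (sub_nonneg.mpr hβ₂) hX,
      mul_nonneg (sub_nonneg.mpr hβ₁) (sub_nonneg.mpr hXZ),
      mul_nonneg ha (sub_nonneg.mpr hZY), mul_nonneg ha hL]

lemma rpow_mul_rpow_neg_mul_rpow_neg_le {x y z a s β : ℝ} (hx : 1 ≤ x) (hy : 1 ≤ y)
    (hz : 1 ≤ z) (hzxy : z ≤ x + y) (ha : 0 ≤ a) (hsa : s ≤ 2 * a) (hβ₁ : β + s ≤ a)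
    (hβ₂ : β + 2 * s ≤ 2 * a) :
    z ^ β * x ^ (-a) * y ^ (-a) ≤ 2 ^ a * ((x ^ (-s) + y ^ (-s)) * z ^ (-s)) := by
  have hxs : 0 ≤ x ^ (-s) := rpow_nonneg (by linarith) _
  have hys : 0 ≤ y ^ (-s) := rpow_nonneg (by linarith) _
  rcases le_total x y with hxy | hyx
  · refine (rpow_mul_rpow_neg_mul_rpow_neg_le_of_le hx hxy hz hzxy ha hsa hβ₁ hβ₂).trans ?_
    gcongr
    exact le_add_of_nonneg_right hys
  · rw [mul_right_comm]
    refine (rpow_mul_rpow_neg_mul_rpow_neg_le_of_le hy hyx hz (by linarith) ha hsa hβ₁ hβ₂).trans ?_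
    gcongr
    exact le_add_of_nonneg_left hxs

lemma znorm_rpow_mul_gammaCoef_sq_div_le (h : ℤ × ℤ) {k : ℤ × ℤ} (hk : k ≠ 0) (r a : ℝ) :
    znorm k ^ r * (gammaCoef h k ^ 2 / (znorm h ^ a * znorm (k - h) ^ a)) ≤
      znorm k ^ (r + 2) * znorm h ^ (-a) * znorm (k - h) ^ (-a) := by
  have hk0 : 0 < znorm k := one_pos.trans_le (one_le_znorm hk)
  have := znorm_nonneg h
  have := znorm_nonneg (k - h)
  rw [rpow_add hk0, rpow_two, rpow_neg (znorm_nonneg h), rpow_neg (znorm_nonneg (k - h)),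
    div_eq_mul_inv, mul_inv]
  have := gammaCoef_sq_le h k
  have : 0 ≤ (znorm h ^ a)⁻¹ * (znorm (k - h) ^ a)⁻¹ := by positivity
  calc znorm k ^ r * (gammaCoef h k ^ 2 * ((znorm h ^ a)⁻¹ * (znorm (k - h) ^ a)⁻¹))
      ≤ znorm k ^ r * (znorm k ^ 2 * ((znorm h ^ a)⁻¹ * (znorm (k - h) ^ a)⁻¹)) := by gcongr
    _ = _ := by ring

lemma summable_znorm_rpow_neg {s : ℝ} (hs : 2 < s) :
    Summable fun x : ℤ × ℤ ↦ znorm x ^ (-s) := by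
  have hsup := (finTwoArrowEquiv ℤ).symm.summable_iff.mpr
    (EisensteinSeries.summable_one_div_norm_rpow hs)
  refine hsup.of_nonneg_of_le (fun x ↦ rpow_nonneg (znorm_nonneg x) _) fun x ↦ ?_
  rcases eq_or_ne x 0 with rfl | hx
  · simp [znorm, zero_rpow (by linarith : -s ≠ 0)]
    positivity
  have hsup_pos : 0 < ‖(finTwoArrowEquiv ℤ).symm x‖ :=
    norm_pos_iff.mpr (by simpa using (finTwoArrowEquiv ℤ).symm.injective.ne hx)
  refine rpow_le_rpow_of_nonpos hsup_pos ?_ (by linarith)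
  refine pi_norm_le_iff_of_nonneg (znorm_nonneg x) |>.mpr fun i ↦ ?_
  fin_cases i <;> simp only [Int.norm_eq_abs] <;> apply Real.abs_le_sqrt <;> simp <;> positivity

lemma ENNReal.tsum_tsum_add_comp_sub_mul {G : Type*} [AddGroup G] (g : G → ℝ≥0∞) :
    ∑' k, ∑' h, (g h + g (k - h)) * g k = 2 * (∑' x, g x) ^ 2 := by
  have hshift : ∀ k, ∑' h, g (k - h) = ∑' x, g x := fun k ↦ (Equiv.subLeft k).tsum_eq g
  simp_rw [ENNReal.tsum_mul_right, ENNReal.tsum_add, hshift, ENNReal.tsum_mul_left]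
  ring

lemma ENNReal.tsum_subtype_tsum_subtype_le {α β : Type*} (p : α → Prop) (q : α → β → Prop)
    (f : α → β → ℝ≥0∞) :
    ∑' a : {a // p a}, ∑' b : {b // q a.1 b}, f a.1 b.1 ≤ ∑' a, ∑' b, f a b :=
  (ENNReal.tsum_le_tsum fun a : {a // p a} ↦
    ENNReal.tsum_comp_le_tsum_of_injective Subtype.val_injective (f a.1)).trans
  (ENNReal.tsum_comp_le_tsum_of_injective Subtype.val_injective fun a ↦ ∑' b, f a b)

lemma tsum_tsum_ofReal_znorm_rpow_neg_lt_top {s : ℝ} (hs : 2 < s) :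
    ∑' k, ∑' h, ENNReal.ofReal ((znorm h ^ (-s) + znorm (k - h) ^ (-s)) * znorm k ^ (-s)) < ⊤ := by
  have hnn : ∀ x, 0 ≤ znorm x ^ (-s) := fun x ↦ rpow_nonneg (znorm_nonneg x) _
  set g : ℤ × ℤ → ℝ≥0∞ := fun x ↦ ENNReal.ofReal (znorm x ^ (-s))
  calc _ = ∑' k, ∑' h, (g h + g (k - h)) * g k := by
        simp only [g, ENNReal.ofReal_mul (add_nonneg (hnn _) (hnn _)),
          ENNReal.ofReal_add (hnn _) (hnn _)]
    _ = 2 * (∑' x, g x) ^ 2 := ENNReal.tsum_tsum_add_comp_sub_mul g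
    _ < ⊤ := by
        rw [← ENNReal.ofReal_tsum_of_nonneg hnn (summable_znorm_rpow_neg hs)]
        finiteness

lemma ofReal_znorm_rpow_mul_ofReal_gammaCoef_le {h k : ℤ × ℤ} (hh : h ≠ 0) (hk : k ≠ 0)
    (hhk : h ≠ k) {r a s : ℝ} (ha : 0 ≤ a) (hsa : s ≤ 2 * a) (hr₁ : r + 2 + s ≤ a)
    (hr₂ : r + 2 + 2 * s ≤ 2 * a) :
    ENNReal.ofReal (znorm k ^ r) *
        ENNReal.ofReal (gammaCoef h k ^ 2 / (znorm h ^ a * znorm (k - h) ^ a)) ≤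
      ENNReal.ofReal (2 ^ a) *
        ENNReal.ofReal ((znorm h ^ (-s) + znorm (k - h) ^ (-s)) * znorm k ^ (-s)) := by
  have hkh : k - h ≠ 0 := sub_ne_zero.mpr hhk.symm
  rw [← ENNReal.ofReal_mul (rpow_nonneg (znorm_nonneg k) _),
    ← ENNReal.ofReal_mul (rpow_nonneg zero_le_two _)]
  refine ENNReal.ofReal_le_ofReal ((znorm_rpow_mul_gammaCoef_sq_div_le h hk _ _).trans ?_)
  exact rpow_mul_rpow_neg_mul_rpow_neg_le (one_le_znorm hh) (one_le_znorm hkh) (one_le_znorm hk)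
    (znorm_le_add_znorm_sub h k) ha hsa hr₁ hr₂

theorem statement_9 (H ρ : ℝ) (hH1 : 1 / 4 < H) (hH2 : H < 1)
    (hρ1 : 1 / 4 < H → H < 1 / 2 → ρ < 4 * H - 3)
    (hρ2 : 1 / 2 ≤ H → H < 1 → ρ < 2 * (H - 1)) :
    (∑' k : {k : ℤ × ℤ // k ≠ 0},
      ENNReal.ofReal (znorm k.1 ^ (2 * ρ)) *
        ∑' h : {h : ℤ × ℤ // h ≠ 0 ∧ h ≠ k.1},
          ENNReal.ofReal
            (gammaCoef h.1 k.1 ^ 2 /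
              (znorm h.1 ^ (4 * H) * znorm (k.1 - h.1) ^ (4 * H)))) < ⊤ := by
  have hρ : ρ < 4 * H - 3 ∧ ρ < 2 * H - 2 := by
    rcases lt_or_ge H (1 / 2) with h | h
    · exact ⟨hρ1 hH1 h, by linarith [hρ1 hH1 h]⟩
    · exact ⟨by linarith [hρ2 h hH2], by linarith [hρ2 h hH2]⟩
  obtain ⟨s, hs, hs'⟩ := exists_between
    (show 2 < min (min (8 * H) (4 * H - 2 * ρ - 2)) (4 * H - ρ - 1) by
      simp only [lt_min_iff]; refine ⟨⟨?_, ?_⟩, ?_⟩ <;> linarith)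
  simp only [lt_min_iff] at hs'
  calc _ ≤ ∑' k : {k : ℤ × ℤ // k ≠ 0}, ∑' h : {h : ℤ × ℤ // h ≠ 0 ∧ h ≠ k.1},
        ENNReal.ofReal (2 ^ (4 * H)) * ENNReal.ofReal
          ((znorm h.1 ^ (-s) + znorm (k.1 - h.1) ^ (-s)) * znorm k.1 ^ (-s)) :=
        ENNReal.tsum_le_tsum fun k ↦ ENNReal.tsum_mul_left.symm.trans_le <|
          ENNReal.tsum_le_tsum fun h ↦ ofReal_znorm_rpow_mul_ofReal_gammaCoef_le h.2.1 k.2 h.2.2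
            (by linarith) (by linarith) (by linarith) (by linarith)
    _ ≤ ∑' k, ∑' h, ENNReal.ofReal (2 ^ (4 * H)) * ENNReal.ofReal
          ((znorm h ^ (-s) + znorm (k - h) ^ (-s)) * znorm k ^ (-s)) :=
        ENNReal.tsum_subtype_tsum_subtype_le (· ≠ 0) (fun k h ↦ h ≠ 0 ∧ h ≠ k) fun k h ↦
          ENNReal.ofReal (2 ^ (4 * H)) *
            ENNReal.ofReal ((znorm h ^ (-s) + znorm (k - h) ^ (-s)) * znorm k ^ (-s))
    _ < ⊤ := by
        simp_rw [ENNReal.tsum_mul_left]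
        exact ENNReal.mul_lt_top ENNReal.ofReal_lt_top (tsum_tsum_ofReal_znorm_rpow_neg_lt_top hs)
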